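/- arXiv:1003.3171 — 3 statements merged into one kernel-verified Lean document; each statement's English description precedes it below -/
import Mathlib

section
/- Let U ⊆ ℝⁿ be open and u : U → ℝ upper semicontinuous and bounded. For every α, r > 0 there exists t₀ = t₀(α, r) > 0, depending only on L, α and r, such that whenever osc_U u ≤ α: (i) for all 0 < t < t₀ and all x ∈ U, T^t u(x) = sup_{y ∈ B(x,r) ∩ U} (u(y) − t L((y−x)/t)); and (ii) if t, s > 0 satisfy t + s < t₀ and dist(x, ∂U) > r, then T^{t+s} u(x) = T^t (T^s u)(x). -/
open Set Metric MeasureTheory Filter Bornology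
open scoped RealInnerProductSpace

noncomputable section

abbrev Euc (n : ℕ) := EuclideanSpace ℝ (Fin n)

variable {n : ℕ}

/-- The Lagrangian of `H`, an extended real number. -/
def Lag (H : Euc n → ℝ) (q : Euc n) : EReal :=
  ⨆ p : Euc n, ((⟪p, q⟫ - H p : ℝ) : EReal)

/-- `T^t u (x)`, with supremum taken over `y ∈ S`. Points `y` where the Lagrangian term
is `+∞` contribute nothing, since no real number equals `-∞`. -/
def TupOn (H : Euc n → ℝ) (S : Set (Euc n)) (u : Euc n → ℝ) (t : ℝ) (x : Euc n) : ℝ :=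
  if t = 0 then u x
  else sSup {r : ℝ | ∃ y ∈ S, (r : EReal) = (u y : EReal) - (t : EReal) * Lag H (t⁻¹ • (y - x))}

/-- `T_t u (x)`, with infimum taken over `y ∈ S`. -/
def TdnOn (H : Euc n → ℝ) (S : Set (Euc n)) (u : Euc n → ℝ) (t : ℝ) (x : Euc n) : ℝ :=
  if t = 0 then u x
  else sInf {r : ℝ | ∃ y ∈ S, (r : EReal) = (u y : EReal) + (t : EReal) * Lag H (t⁻¹ • (x - y))}

/-- `S⁺ u (x) = limsup_{t ↓ 0} (T^t u(x) - u(x))/t`. -/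
def Splus (H : Euc n → ℝ) (U : Set (Euc n)) (u : Euc n → ℝ) (x : Euc n) : ℝ :=
  limsup (fun t => (TupOn H U u t x - u x) / t) (nhdsWithin 0 (Ioi 0))

/-- The oscillation `osc_U u = sup_U u - inf_U u`. -/
def oscOn (u : Euc n → ℝ) (U : Set (Euc n)) : ℝ := sSup (u '' U) - sInf (u '' U)

/-- `U_r = {x ∈ U : dist(x, ∂U) > r}`. -/
def inUr (U : Set (Euc n)) (r : ℝ) : Set (Euc n) := {x ∈ U | r < infDist x (frontier U)}

/-- The cone function `C_k(x) = max {p·x : H(p) = k}`. -/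
def coneFn (H : Euc n → ℝ) (k : ℝ) (x : Euc n) : ℝ :=
  sSup {r : ℝ | ∃ p, H p = k ∧ r = ⟪p, x⟫}

/-- The subdifferential of `H` at `p`. -/
def subdiff (H : Euc n → ℝ) (p : Euc n) : Set (Euc n) :=
  {q | ∀ p', H p + ⟪q, p' - p⟫ ≤ H p'}

/-- `Γ_k`: subgradients of `H` at points of the level set `H⁻¹(k)`. -/
def GammaSet (H : Euc n → ℝ) (k : ℝ) : Set (Euc n) :=
  {q | ∃ p, H p = k ∧ q ∈ subdiff H p}

/-- `W_k`: subgradients of `H` at points of the sublevel set `H⁻¹([0,k])`. -/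
def WSet (H : Euc n → ℝ) (k : ℝ) : Set (Euc n) :=
  {q | ∃ p, 0 ≤ H p ∧ H p ≤ k ∧ q ∈ subdiff H p}

/-- `u ∈ Lip_loc(U)`: `u` is locally Lipschitz on `U`. -/
def LocLipOn (u : Euc n → ℝ) (U : Set (Euc n)) : Prop :=
  ∀ x ∈ U, ∃ K : NNReal, ∃ s ∈ nhdsWithin x U, LipschitzOnWith K u s

/-- `ess sup_V H(Dv)`, defined to be `+∞` if `v` is not locally Lipschitz in `V`.
Here `Dv` is the a.e.-defined gradient (Rademacher). -/
def essSupH (H : Euc n → ℝ) (V : Set (Euc n)) (v : Euc n → ℝ) : EReal :=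
  haveI := Classical.propDecidable (LocLipOn v V)
  if LocLipOn v V then
    essSup (fun x => ((H (gradient v x) : ℝ) : EReal)) (volume.restrict V)
  else ⊤

/-- `u` is absolutely subminimizing for `H` in `U`. -/
def AbsSubmin (H : Euc n → ℝ) (U : Set (Euc n)) (u : Euc n → ℝ) : Prop :=
  LocLipOn u U ∧
  ∀ V : Set (Euc n), IsOpen V → IsCompact (closure V) → closure V ⊆ U →
    ∀ v : Euc n → ℝ, LocLipOn v V → ContinuousOn v (closure V) →
      EqOn v u (frontier V) → (∀ x ∈ V, v x ≤ u x) →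
        essSupH H V u ≤ essSupH H V v

/-- `u` is absolutely superminimizing for `H` in `U`. -/
def AbsSupermin (H : Euc n → ℝ) (U : Set (Euc n)) (u : Euc n → ℝ) : Prop :=
  LocLipOn u U ∧
  ∀ V : Set (Euc n), IsOpen V → IsCompact (closure V) → closure V ⊆ U →
    ∀ v : Euc n → ℝ, LocLipOn v V → ContinuousOn v (closure V) →
      EqOn v u (frontier V) → (∀ x ∈ V, u x ≤ v x) →
        essSupH H V u ≤ essSupH H V v

/-- `u` satisfies comparisons with cones from above in `U`. -/
def CmpConesAbove (H : Euc n → ℝ) (U : Set (Euc n)) (u : Euc n → ℝ) : Prop :=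
  ∀ k : ℝ, 0 ≤ k → ∀ V : Set (Euc n), IsOpen V → IsCompact (closure V) → closure V ⊆ U →
    ∀ x₀, x₀ ∉ V →
      sSup ((fun x => u x - coneFn H k (x - x₀)) '' closure V) =
      sSup ((fun x => u x - coneFn H k (x - x₀)) '' frontier V)

/-- `u` satisfies the convexity criterion in `U`. -/
def ConvexityCriterion (H : Euc n → ℝ) (U : Set (Euc n)) (u : Euc n → ℝ) : Prop :=
  ∀ V : Set (Euc n), IsOpen V → IsCompact (closure V) → closure V ⊆ U →
    ∃ δ > (0:ℝ), ∀ x ∈ V, ConvexOn ℝ (Icc 0 δ) (fun t => TupOn H U u t x)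

/-- `u` satisfies the pointwise convexity criterion in `U`. -/
def PtwiseCC (H : Euc n → ℝ) (U : Set (Euc n)) (u : Euc n → ℝ) : Prop :=
  UpperSemicontinuousOn (Splus H U u) U ∧
  ∀ x ∈ U, ∃ δ > (0:ℝ), ConvexOn ℝ (Icc 0 δ) (fun t => TupOn H U u t x)

end

/-!
Since the convex function `H` is bounded on the ball of radius `δ`, the Lagrangian grows at
least like `δ |q| - M`; hence for small `t` the cost `t L((y - x)/t)` of reaching a point `y` at distance `≥ r` exceeds
the oscillation `α`, and such points never beat `y = x` (where the cost is `L 0 = 0`). This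
localizes `T^t` to `B(x, r)`. For the semigroup property, `T^t ∘ T^s ≤ T^{t+s}` is the convexity
of `L`; conversely, a point `y ∈ B(x, r) ⊆ U` is reached at time `t + s` through the intermediate
point `x + t/(t+s) (y - x)`, which stays in the ball.
-/

section HopfLax

variable {n : ℕ} {H : Euc n → ℝ} {S U V : Set (Euc n)} {u : Euc n → ℝ} {t s l : ℝ}
  {x y : Euc n}

theorem le_lag (H : Euc n → ℝ) (p q : Euc n) : ((⟪p, q⟫ - H p : ℝ) : EReal) ≤ Lag H q :=
  le_iSup (fun p => ((⟪p, q⟫ - H p : ℝ) : EReal)) p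

theorem coe_neg_le_lag (H : Euc n → ℝ) (q : Euc n) : ((-H 0 : ℝ) : EReal) ≤ Lag H q := by
  simpa using le_lag H 0 q

theorem lag_ne_bot (H : Euc n → ℝ) (q : Euc n) : Lag H q ≠ ⊥ :=
  ne_bot_of_le_ne_bot (EReal.coe_ne_bot _) (coe_neg_le_lag H q)

theorem lag_nonneg (hH0 : H 0 = 0) (q : Euc n) : 0 ≤ Lag H q := by
  simpa [hH0] using coe_neg_le_lag H q

theorem lag_zero (hH0 : H 0 = 0) (hH : ∀ p, 0 ≤ H p) : Lag H 0 = 0 :=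
  le_antisymm (iSup_le fun p => by simpa using hH p) (lag_nonneg hH0 0)

theorem exists_lag_eq_coe_of_le {q : Euc n} {m : ℝ} (h : Lag H q ≤ m) :
    ∃ l : ℝ, Lag H q = l ∧ l ≤ m := by
  induction hq : Lag H q using EReal.rec with
  | bot => exact absurd hq (lag_ne_bot H q)
  | top => rw [hq] at h; exact absurd h (by simp)
  | coe l => rw [hq] at h; exact ⟨l, rfl, EReal.coe_le_coe_iff.mp h⟩

/-- Convexity of `L`, a supremum of affine functions. -/
theorem exists_lag_smul_add_eq {a b : Euc n} {la lb : ℝ} (ht : 0 < t) (hs : 0 < s)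
    (ha : Lag H a = la) (hb : Lag H b = lb) :
    ∃ l : ℝ, Lag H ((t + s)⁻¹ • (t • a + s • b)) = l ∧ (t + s) * l ≤ t * la + s * lb := by
  have hts : 0 < t + s := add_pos ht hs
  have hle : Lag H ((t + s)⁻¹ • (t • a + s • b)) ≤ ((t * la + s * lb) / (t + s) : ℝ) := by
    refine iSup_le fun p => EReal.coe_le_coe_iff.mpr ?_
    have hpa : ⟪p, a⟫ - H p ≤ la := EReal.coe_le_coe_iff.mp (ha ▸ le_lag H p a)
    have hpb : ⟪p, b⟫ - H p ≤ lb := EReal.coe_le_coe_iff.mp (hb ▸ le_lag H p b)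
    rw [inner_smul_right, inner_add_right, inner_smul_right, inner_smul_right,
      le_div_iff₀ hts, inv_mul_eq_div, sub_mul, div_mul_cancel₀ _ hts.ne']
    nlinarith
  obtain ⟨l, hl, hlm⟩ := exists_lag_eq_coe_of_le hle
  exact ⟨l, hl, by rwa [le_div_iff₀ hts, mul_comm] at hlm⟩

theorem exists_sub_le_lag (hH : Continuous H) {δ : ℝ} (hδ : 0 ≤ δ) :
    ∃ M : ℝ, ∀ q : Euc n, ((δ * ‖q‖ - M : ℝ) : EReal) ≤ Lag H q := by
  obtain ⟨M, hM⟩ := (isCompact_closedBall (0 : Euc n) δ).bddAbove_image hH.continuousOn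
  refine ⟨M, fun q => le_trans (EReal.coe_le_coe_iff.mpr ?_) (le_lag H ((δ / ‖q‖) • q) q)⟩
  have hp : (δ / ‖q‖) • q ∈ closedBall (0 : Euc n) δ := by
    rw [mem_closedBall_zero_iff, norm_smul, Real.norm_of_nonneg (by positivity)]
    rcases eq_or_ne ‖q‖ 0 with hq | hq
    · simpa [hq] using hδ
    · rw [div_mul_cancel₀ _ hq]
  have hinner : ⟪(δ / ‖q‖) • q, q⟫ = δ * ‖q‖ := by
    rcases eq_or_ne ‖q‖ 0 with hq | hq
    · simp [norm_eq_zero.mp hq]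
    · rw [real_inner_smul_left, real_inner_self_eq_norm_mul_norm]
      field_simp
  linarith [hM (mem_image_of_mem H hp)]

theorem exists_pos_le_mul_lag (hH : Continuous H) (α : ℝ) {r : ℝ} (hr : 0 < r) :
    ∃ t₀ > 0, ∀ t, 0 < t → t < t₀ → ∀ q : Euc n, r ≤ ‖q‖ →
      ∀ l : ℝ, Lag H (t⁻¹ • q) = l → α ≤ t * l := by
  obtain ⟨M, hM⟩ := exists_sub_le_lag hH (δ := (|α| + 1) / r) (by positivity)
  refine ⟨1 / (|M| + 1), by positivity, fun t ht htt₀ q hq l hl => ?_⟩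
  have hlow : (|α| + 1) / r * (‖q‖ / t) - M ≤ l := by
    have h := hM (t⁻¹ • q)
    rw [hl, norm_smul, norm_inv, Real.norm_of_nonneg ht.le, inv_mul_eq_div] at h
    exact EReal.coe_le_coe_iff.mp h
  have hdist : |α| + 1 ≤ (|α| + 1) / r * ‖q‖ := by
    rw [div_mul_eq_mul_div, le_div_iff₀ hr]
    exact mul_le_mul_of_nonneg_left hq (by positivity)
  have htM : t * |M| < 1 := by
    rw [lt_div_iff₀ (by positivity)] at htt₀
    nlinarith [abs_nonneg M]
  calc α ≤ |α| + 1 - t * |M| := by linarith [le_abs_self α]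
    _ ≤ (|α| + 1) / r * ‖q‖ - t * M := by
      linarith [mul_le_mul_of_nonneg_left (le_abs_self M) ht.le]
    _ = t * ((|α| + 1) / r * (‖q‖ / t) - M) := by field_simp
    _ ≤ t * l := mul_le_mul_of_nonneg_left hlow ht.le

def hopfLaxValues (H : Euc n → ℝ) (S : Set (Euc n)) (u : Euc n → ℝ) (t : ℝ) (x : Euc n) :
    Set ℝ :=
  {r : ℝ | ∃ y ∈ S, (r : EReal) = (u y : EReal) - (t : EReal) * Lag H (t⁻¹ • (y - x))}

theorem tupOn_eq_sSup (ht : t ≠ 0) : TupOn H S u t x = sSup (hopfLaxValues H S u t x) :=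
  if_neg ht

theorem mem_hopfLaxValues_iff (ht : 0 < t) {a : ℝ} :
    a ∈ hopfLaxValues H S u t x ↔
      ∃ y ∈ S, ∃ l : ℝ, Lag H (t⁻¹ • (y - x)) = l ∧ a = u y - t * l := by
  constructor
  · rintro ⟨y, hy, ha⟩
    induction hl : Lag H (t⁻¹ • (y - x)) using EReal.rec with
    | bot => exact absurd hl (lag_ne_bot H _)
    | top => rw [hl, EReal.coe_mul_top_of_pos ht] at ha; simp at ha
    | coe l => rw [hl] at ha; exact ⟨y, hy, l, hl, by exact_mod_cast ha⟩
  · rintro ⟨y, hy, l, hl, rfl⟩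
    exact ⟨y, hy, by rw [hl]; norm_cast⟩

theorem bddAbove_hopfLaxValues (hb : BddAbove (u '' S)) (ht : 0 < t) :
    BddAbove (hopfLaxValues H S u t x) := by
  obtain ⟨b, hb⟩ := hb
  refine ⟨b + t * H 0, fun a ha => ?_⟩
  obtain ⟨y, hy, l, hl, rfl⟩ := (mem_hopfLaxValues_iff ht).mp ha
  have hl0 : -H 0 ≤ l := EReal.coe_le_coe_iff.mp (hl ▸ coe_neg_le_lag H _)
  nlinarith [hb (mem_image_of_mem u hy)]

theorem le_tupOn (hb : BddAbove (u '' S)) (ht : 0 < t) (hy : y ∈ S)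
    (hl : Lag H (t⁻¹ • (y - x)) = l) : u y - t * l ≤ TupOn H S u t x := by
  rw [tupOn_eq_sSup ht.ne']
  exact le_csSup (bddAbove_hopfLaxValues hb ht)
    ((mem_hopfLaxValues_iff ht).mpr ⟨y, hy, l, hl, rfl⟩)

theorem tupOn_le (hH0 : H 0 = 0) (hH : ∀ p, 0 ≤ H p) (hx : x ∈ S) (ht : 0 < t) {c : ℝ}
    (h : ∀ y ∈ S, ∀ l : ℝ, Lag H (t⁻¹ • (y - x)) = l → u y - t * l ≤ c) :
    TupOn H S u t x ≤ c := by
  have hx' : u x ∈ hopfLaxValues H S u t x := (mem_hopfLaxValues_iff ht).mpr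
    ⟨x, hx, 0, by rw [sub_self, smul_zero, lag_zero hH0 hH, EReal.coe_zero], by ring⟩
  rw [tupOn_eq_sSup ht.ne']
  refine csSup_le ⟨u x, hx'⟩ fun a ha => ?_
  obtain ⟨y, hy, l, hl, rfl⟩ := (mem_hopfLaxValues_iff ht).mp ha
  exact h y hy l hl

theorem self_le_tupOn (hH0 : H 0 = 0) (hH : ∀ p, 0 ≤ H p) (hb : BddAbove (u '' S))
    (ht : 0 < t) (hx : x ∈ S) : u x ≤ TupOn H S u t x := by
  simpa using le_tupOn hb ht hx (l := 0)
    (by rw [sub_self, smul_zero, lag_zero hH0 hH, EReal.coe_zero])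

theorem tupOn_mono (hH0 : H 0 = 0) (hH : ∀ p, 0 ≤ H p) (hb : BddAbove (u '' U)) (hSU : S ⊆ U)
    (hx : x ∈ S) (ht : 0 < t) : TupOn H S u t x ≤ TupOn H U u t x :=
  tupOn_le hH0 hH hx ht fun _ hy _ hl => le_tupOn hb ht (hSU hy) hl

theorem bddAbove_tupOn (hH0 : H 0 = 0) (hH : ∀ p, 0 ≤ H p) (hb : BddAbove (u '' S))
    (ht : 0 < t) : BddAbove ((fun x => TupOn H S u t x) '' S) := by
  obtain ⟨b, hb⟩ := hb
  refine ⟨b, forall_mem_image.mpr fun x hx => tupOn_le hH0 hH hx ht fun y hy l hl => ?_⟩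
  have hl0 : 0 ≤ l := EReal.coe_nonneg.mp (hl ▸ lag_nonneg hH0 _)
  nlinarith [hb (mem_image_of_mem u hy)]

theorem tupOn_eq_tupOn_ball_inter (hH0 : H 0 = 0) (hH : ∀ p, 0 ≤ H p)
    (hb : BddAbove (u '' S)) (ht : 0 < t) (hx : x ∈ S) {r : ℝ} (hr : 0 < r)
    (hfar : ∀ y ∈ S, r ≤ dist y x → ∀ l : ℝ, Lag H (t⁻¹ • (y - x)) = l → u y - t * l ≤ u x) :
    TupOn H S u t x = TupOn H (ball x r ∩ S) u t x := by
  have hxB : x ∈ ball x r ∩ S := ⟨mem_ball_self hr, hx⟩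
  have hbB : BddAbove (u '' (ball x r ∩ S)) := hb.mono (image_mono inter_subset_right)
  refine le_antisymm (tupOn_le hH0 hH hx ht fun y hy l hl => ?_)
    (tupOn_mono hH0 hH hb inter_subset_right hxB ht)
  by_cases hyB : y ∈ ball x r
  · exact le_tupOn hbB ht ⟨hyB, hy⟩ hl
  · exact (hfar y hy (not_lt.mp hyB) l hl).trans (self_le_tupOn hH0 hH hbB ht hxB)

theorem tupOn_tupOn_le (hH0 : H 0 = 0) (hH : ∀ p, 0 ≤ H p) (hb : BddAbove (u '' U))
    (ht : 0 < t) (hs : 0 < s) (hx : x ∈ U) :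
    TupOn H U (fun z => TupOn H U u s z) t x ≤ TupOn H U u (t + s) x := by
  refine tupOn_le hH0 hH hx ht fun z hz l₁ hl₁ => ?_
  suffices TupOn H U u s z ≤ TupOn H U u (t + s) x + t * l₁ by linarith
  refine tupOn_le hH0 hH hz hs fun y hy l₂ hl₂ => ?_
  obtain ⟨l, hl, hle⟩ := exists_lag_smul_add_eq ht hs hl₁ hl₂
  rw [smul_inv_smul₀ ht.ne', smul_inv_smul₀ hs.ne', sub_add_sub_cancel'] at hl
  linarith [le_tupOn hb (add_pos ht hs) hy hl]

theorem tupOn_le_tupOn_tupOn (hH0 : H 0 = 0) (hH : ∀ p, 0 ≤ H p) (hb : BddAbove (u '' U))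
    (hV : Convex ℝ V) (hVU : V ⊆ U) (hx : x ∈ V) (ht : 0 < t) (hs : 0 < s) :
    TupOn H V u (t + s) x ≤ TupOn H U (fun z => TupOn H U u s z) t x := by
  have hts : 0 < t + s := add_pos ht hs
  refine tupOn_le hH0 hH hx hts fun y hy l hl => ?_
  set z := x + (t / (t + s)) • (y - x)
  have hz : z ∈ V :=
    hV.add_smul_sub_mem hx hy ⟨by positivity, (div_le_one hts).mpr (by linarith)⟩
  have hzx : t⁻¹ • (z - x) = (t + s)⁻¹ • (y - x) := by
    simp only [z, add_sub_cancel_left, smul_smul]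
    field_simp
  have hyz : s⁻¹ • (y - z) = (t + s)⁻¹ • (y - x) := by
    have : y - z = (1 - t / (t + s)) • (y - x) := by
      simp only [z, sub_smul, one_smul]
      abel
    rw [this, smul_smul]
    congr 1
    field_simp
    ring
  have h₁ : u y - s * l ≤ TupOn H U u s z := le_tupOn hb hs (hVU hy) (hyz ▸ hl)
  have h₂ : TupOn H U u s z - t * l ≤ TupOn H U (fun z => TupOn H U u s z) t x :=
    le_tupOn (bddAbove_tupOn hH0 hH hb hs) ht (hVU hz) (hzx ▸ hl)
  linarith

theorem le_add_of_oscOn_le {α : ℝ} (hu : IsBounded (u '' U)) (hosc : oscOn u U ≤ α) (hx : x ∈ U)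
    (hy : y ∈ U) : u y ≤ u x + α := by
  have h₁ := le_csSup hu.bddAbove (mem_image_of_mem u hy)
  have h₂ := csInf_le hu.bddBelow (mem_image_of_mem u hx)
  rw [oscOn] at hosc
  linarith

end HopfLax

theorem ball_subset_of_lt_infDist_frontier {E : Type*} [NormedAddCommGroup E]
    [NormedSpace ℝ E] [FiniteDimensional ℝ E] {U : Set E} {x : E} {r : ℝ} (hx : x ∈ U)
    (hr : r < infDist x (frontier U)) : ball x r ⊆ U := by
  rcases eq_or_ne U univ with rfl | hU
  · exact subset_univ _
  obtain ⟨y, hy, hxy⟩ := exists_mem_frontier_infDist_compl_eq_dist hx hU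
  calc ball x r ⊆ ball x (infDist x Uᶜ) :=
        ball_subset_ball (hxy ▸ hr.le.trans (infDist_le_dist_of_mem hy))
    _ ⊆ U := ball_infDist_compl_subset

theorem hopf_lax_localization_general {n : ℕ} (H : Euc n → ℝ)
    (hHconv : ConvexOn ℝ Set.univ H) (hH0 : H 0 = 0) (hHnonneg : ∀ p, 0 ≤ H p) :
    ∀ α r : ℝ, 0 < α → 0 < r → ∃ t₀ > (0:ℝ),
      ∀ U : Set (Euc n), IsOpen U →
        ∀ u : Euc n → ℝ, UpperSemicontinuousOn u U → Bornology.IsBounded (u '' U) →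
          oscOn u U ≤ α →
          (∀ t : ℝ, 0 < t → t < t₀ → ∀ x ∈ U,
            TupOn H U u t x = TupOn H (ball x r ∩ U) u t x) ∧
          (∀ t s : ℝ, 0 < t → 0 < s → t + s < t₀ → ∀ x ∈ U,
            r < infDist x (frontier U) →
            TupOn H U u (t + s) x = TupOn H U (fun y => TupOn H U u s y) t x) := by
  intro α r _ hr
  have hH : Continuous H := continuousOn_univ.mp (hHconv.continuousOn isOpen_univ)
  obtain ⟨t₀, ht₀, hcost⟩ := exists_pos_le_mul_lag hH α hr
  refine ⟨t₀, ht₀, fun U _ u _ hu hosc => ?_⟩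
  have hlocal : ∀ t, 0 < t → t < t₀ → ∀ x ∈ U,
      TupOn H U u t x = TupOn H (ball x r ∩ U) u t x := by
    refine fun t ht htt₀ x hx =>
      tupOn_eq_tupOn_ball_inter hH0 hHnonneg hu.bddAbove ht hx hr fun y hy hxy l hl => ?_
    have := hcost t ht htt₀ (y - x) (by rwa [← dist_eq_norm]) l hl
    linarith [le_add_of_oscOn_le hu hosc hx hy]
  refine ⟨hlocal, fun t s ht hs hts x hx hxr => le_antisymm ?_
    (tupOn_tupOn_le hH0 hHnonneg hu.bddAbove ht hs hx)⟩
  have hball := ball_subset_of_lt_infDist_frontier hx hxr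
  rw [hlocal (t + s) (add_pos ht hs) hts x hx, inter_eq_left.mpr hball]
  exact tupOn_le_tupOn_tupOn hH0 hHnonneg hu.bddAbove (convex_ball x r) hball
    (mem_ball_self hr) ht hs

/-- Localization and semigroup property of the Hopf–Lax flow, for small times depending
only on `L`, `α` and `r`. -/
theorem hopf_lax_localization {n : ℕ} (hn : 1 ≤ n) (H : Euc n → ℝ)
    (hHconv : ConvexOn ℝ Set.univ H) (hH0 : H 0 = 0) (hHnonneg : ∀ p, 0 ≤ H p)
    (hHzb : Bornology.IsBounded {p : Euc n | H p = 0})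
    (hHzi : interior {p : Euc n | H p = 0} = ∅) :
    ∀ α r : ℝ, 0 < α → 0 < r → ∃ t₀ > (0:ℝ),
      ∀ U : Set (Euc n), IsOpen U →
        ∀ u : Euc n → ℝ, UpperSemicontinuousOn u U → Bornology.IsBounded (u '' U) →
          oscOn u U ≤ α →
          (∀ t : ℝ, 0 < t → t < t₀ → ∀ x ∈ U,
            TupOn H U u t x = TupOn H (ball x r ∩ U) u t x) ∧
          (∀ t s : ℝ, 0 < t → 0 < s → t + s < t₀ → ∀ x ∈ U,
            r < infDist x (frontier U) →
            TupOn H U u (t + s) x = TupOn H U (fun y => TupOn H U u s y) t x) :=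
  hopf_lax_localization_general H hHconv hH0 hHnonneg
end

section
/- Let U ⊆ ℝⁿ be open and let u : U → ℝ be upper semicontinuous and satisfy comparisons with cones from above in U. Then u is continuous on U. Moreover, if R > 0, x, y ∈ U are such that B(x,R) ∪ B(y,R) ⋐ U and |x − y| ≤ R, and k ≥ 0 satisfies osc_{B(x,R) ∪ B(y,R)} u ≤ R · M_k, then |u(x) − u(y)| ≤ K_k |x − y|. -/
open Set Metric MeasureTheory Filter Bornology
open scoped RealInnerProductSpace

open Topology
open scoped Pointwise

/-!
Comparison with the cone `C_k(· - x)` on the punctured ball `B(c, ρ) \ {x}` bounds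
`u - C_k(· - x)` inside the ball by its values on the sphere and at the vertex `x`. Since `H` is
coercive, `C_k ≥ M_k |·|` with `M_k → ∞`, so for `k` large the sphere values cannot win: with the
vertex `x` near `x₀` this gives `u x ≥ u x₀ - C_k(x₀ - x)`, i.e. lower semicontinuity, and together
with upper semicontinuity, continuity. If the oscillation is at most `R M_k`, the sphere values
cannot win already for this `k`, and the vertex `y` gives `u x - u y ≤ C_k(x - y) ≤ K_k |x - y|`.
-/

section Sublevel

variable {E : Type*} [NormedAddCommGroup E] [NormedSpace ℝ E] [FiniteDimensional ℝ E]

/-- `H` grows at least linearly, with the slope given by its minimum on a sphere enclosing the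
zero set, because `H` lies below its chords through `0`. -/
theorem ConvexOn.isBounded_sublevel_of_isBounded_zero {H : E → ℝ} (hconv : ConvexOn ℝ univ H)
    (hH0 : H 0 = 0) (hnonneg : ∀ p, 0 ≤ H p) (hzero : IsBounded {p | H p = 0}) (k : ℝ) :
    IsBounded {p | H p ≤ k} := by
  have hcont : Continuous H := continuousOn_univ.1 (hconv.continuousOn isOpen_univ)
  obtain ⟨r, hzero_sub⟩ := hzero.subset_ball 0
  have hr : 0 < r := by simpa using hzero_sub (show H 0 = 0 from hH0)
  have hpos : ∀ q ∈ sphere (0 : E) r, 0 < H q := fun q hq =>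
    (hnonneg q).lt_of_ne fun h =>
      (mem_sphere.1 hq ▸ mem_ball.1 (hzero_sub h.symm)).false
  obtain ⟨ε, hε, hεH⟩ := (isCompact_sphere (0 : E) r).exists_forall_le' hcont.continuousOn hpos
  refine (isBounded_closedBall (x := (0 : E)) (r := max r (r * k / ε))).subset fun p hp => ?_
  rw [mem_closedBall_zero_iff]
  rcases le_or_gt ‖p‖ r with hpr | hpr
  · exact hpr.trans (le_max_left _ _)
  have hp0 : 0 < ‖p‖ := hr.trans hpr
  set t := r / ‖p‖
  have ht : 0 < t := div_pos hr hp0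
  have hchord : H (t • p) ≤ t * H p := by
    simpa [hH0] using hconv.2 (mem_univ p) (mem_univ 0) ht.le
      (sub_nonneg.2 ((div_le_one hp0).2 hpr.le)) (add_sub_cancel t 1)
  have hsphere : t • p ∈ sphere (0 : E) r := by
    rw [mem_sphere_zero_iff_norm, norm_smul, Real.norm_of_nonneg ht.le, div_mul_cancel₀ _ hp0.ne']
  have : ε * ‖p‖ ≤ r * k := by
    have h := (hεH _ hsphere).trans (hchord.trans (mul_le_mul_of_nonneg_left hp ht.le))
    rwa [div_mul_eq_mul_div, le_div_iff₀ hp0] at h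
  exact ((le_div_iff₀ hε).2 (by linarith)).trans (le_max_right _ _)

end Sublevel

section ConeFn

variable {n : ℕ} {H : Euc n → ℝ} {k : ℝ}

theorem coneFn_zero (H : Euc n → ℝ) (k : ℝ) : coneFn H k 0 = 0 := by
  have hmem : ∀ r ∈ {r : ℝ | ∃ p, H p = k ∧ r = ⟪p, (0 : Euc n)⟫}, r = 0 := by
    rintro r ⟨p, -, rfl⟩
    exact inner_zero_right p
  exact le_antisymm (Real.sSup_nonpos fun r hr => (hmem r hr).le)
    (Real.sSup_nonneg fun r hr => (hmem r hr).ge)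

theorem coneFn_smul {t : ℝ} (ht : 0 ≤ t) (x : Euc n) :
    coneFn H k (t • x) = t * coneFn H k x := by
  have hset : {r : ℝ | ∃ p, H p = k ∧ r = ⟪p, t • x⟫} =
      t • {r : ℝ | ∃ p, H p = k ∧ r = ⟪p, x⟫} := by
    ext r
    simp only [mem_ofPred_eq, mem_smul_set, real_inner_smul_right, smul_eq_mul]
    constructor
    · rintro ⟨p, hp, rfl⟩
      exact ⟨_, ⟨p, hp, rfl⟩, rfl⟩
    · rintro ⟨_, ⟨p, hp, rfl⟩, rfl⟩
      exact ⟨p, hp, rfl⟩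
  rw [coneFn, hset, Real.sSup_smul_of_nonneg ht, smul_eq_mul, coneFn]

theorem inner_le_coneFn (hlev : IsBounded {p | H p = k}) {p : Euc n} (hp : H p = k)
    (x : Euc n) : ⟪p, x⟫ ≤ coneFn H k x := by
  obtain ⟨R, -, hR⟩ := hlev.exists_pos_norm_le
  refine le_csSup ⟨R * ‖x‖, ?_⟩ ⟨p, hp, rfl⟩
  rintro r ⟨q, hq, rfl⟩
  exact (real_inner_le_norm q x).trans (mul_le_mul_of_nonneg_right (hR q hq) (norm_nonneg x))

theorem exists_coneFn_le_mul_norm (hlev : IsBounded {p | H p = k}) :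
    ∃ K, ∀ x, coneFn H k x ≤ K * ‖x‖ := by
  obtain ⟨R, hR, hRlev⟩ := hlev.exists_pos_norm_le
  refine ⟨R, fun x => Real.sSup_le ?_ (by positivity)⟩
  rintro r ⟨q, hq, rfl⟩
  exact (real_inner_le_norm q x).trans (mul_le_mul_of_nonneg_right (hRlev q hq) (norm_nonneg x))

variable (hHc : Continuous H) (hH0 : H 0 = 0)
include hHc hH0

theorem exists_nonneg_smul_eq (hsub : IsBounded {p | H p ≤ k}) (hk : 0 ≤ k) {z : Euc n}
    (hz : z ≠ 0) : ∃ t : ℝ, 0 ≤ t ∧ H (t • z) = k := by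
  obtain ⟨R, hR, hRsub⟩ := hsub.exists_pos_norm_le
  have hz' : 0 < ‖z‖ := norm_pos_iff.2 hz
  set T := (R + 1) / ‖z‖
  have hT : 0 ≤ T := by positivity
  have hkT : k ≤ H (T • z) := by
    by_contra! h
    have := hRsub _ h.le
    rw [norm_smul, Real.norm_of_nonneg hT, div_mul_cancel₀ _ hz'.ne'] at this
    linarith
  obtain ⟨t, ht, htk⟩ := intermediate_value_Icc hT (hHc.comp (continuous_id.smul
    continuous_const)).continuousOn ⟨by simpa [hH0] using hk, hkT⟩
  exact ⟨t, ht.1, htk⟩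

theorem coneFn_nonneg (hsub : IsBounded {p | H p ≤ k}) (hk : 0 ≤ k) (x : Euc n) :
    0 ≤ coneFn H k x := by
  rcases eq_or_ne x 0 with rfl | hx
  · exact (coneFn_zero H k).ge
  obtain ⟨t, ht, htk⟩ := exists_nonneg_smul_eq hHc hH0 hsub hk hx
  have hlev : IsBounded {p | H p = k} := hsub.subset fun p hp => le_of_eq hp
  calc 0 ≤ t * ⟪x, x⟫ := mul_nonneg ht real_inner_self_nonneg
    _ = ⟪t • x, x⟫ := (real_inner_smul_left x x t).symm
    _ ≤ coneFn H k x := inner_le_coneFn hlev htk x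

theorem norm_mul_sInf_sphere_le_coneFn (hsub : IsBounded {p | H p ≤ k}) (hk : 0 ≤ k)
    (x : Euc n) : ‖x‖ * sInf (coneFn H k '' sphere 0 1) ≤ coneFn H k x := by
  rcases eq_or_ne x 0 with rfl | hx
  · simp [coneFn_zero]
  have hx' : 0 < ‖x‖ := norm_pos_iff.2 hx
  set z := ‖x‖⁻¹ • x
  have hz : z ∈ sphere (0 : Euc n) 1 := by
    rw [mem_sphere_zero_iff_norm, norm_smul, norm_inv, norm_norm, inv_mul_cancel₀ hx'.ne']
  have hxz : x = ‖x‖ • z := by rw [smul_inv_smul₀ (norm_ne_zero_iff.2 hx)]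
  have hbdd : BddBelow (coneFn H k '' sphere 0 1) :=
    ⟨0, forall_mem_image.2 fun y _ => coneFn_nonneg hHc hH0 hsub hk y⟩
  calc ‖x‖ * sInf (coneFn H k '' sphere 0 1) ≤ ‖x‖ * coneFn H k z :=
        mul_le_mul_of_nonneg_left (csInf_le hbdd (mem_image_of_mem _ hz)) hx'.le
    _ = coneFn H k x := by rw [← coneFn_smul hx'.le, ← hxz]

/-- `M_k → ∞`: a level set above the maximum of `H` on `B(0, C)` lies outside that ball. -/
theorem exists_le_sInf_coneFn_sphere (hn : 1 ≤ n) (hsub : ∀ k, IsBounded {p | H p ≤ k}) (C : ℝ) :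
    ∃ k, 0 ≤ k ∧ C ≤ sInf (coneFn H k '' sphere (0 : Euc n) 1) := by
  have : Nonempty (Fin n) := ⟨⟨0, hn⟩⟩
  obtain ⟨s, hs⟩ := (isCompact_closedBall (0 : Euc n) C).bddAbove_image hHc.continuousOn
  set k := max s 0 + 1
  have hk : 0 ≤ k := by positivity
  refine ⟨k, hk, le_csInf ((NormedSpace.sphere_nonempty.2 zero_le_one).image _) ?_⟩
  rintro _ ⟨z, hz, rfl⟩
  rw [mem_sphere_zero_iff_norm] at hz
  obtain ⟨t, ht, htk⟩ := exists_nonneg_smul_eq hHc hH0 (hsub k) hk (norm_ne_zero_iff.1 (by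
    rw [hz]; exact one_ne_zero))
  have hCt : C ≤ t := by
    by_contra! htC
    have hball : t • z ∈ closedBall (0 : Euc n) C := by
      rw [mem_closedBall_zero_iff, norm_smul, hz, mul_one, Real.norm_of_nonneg ht]
      exact htC.le
    have := hs (mem_image_of_mem H hball)
    linarith [le_max_left s 0]
  calc C ≤ t := hCt
    _ = ⟪t • z, z⟫ := by rw [real_inner_smul_left, real_inner_self_eq_norm_sq, hz]; ring
    _ ≤ coneFn H k z := inner_le_coneFn ((hsub k).subset fun p hp => le_of_eq hp) htk z

end ConeFn

theorem ContinuousOn.le_csSup_image_of_mem_closure {α : Type*} [TopologicalSpace α] {f : α → ℝ}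
    {s : Set α} {x : α} (hf : ContinuousOn f (closure s)) (hbdd : BddAbove (f '' s))
    (hx : x ∈ closure s) : f x ≤ sSup (f '' s) :=
  closure_minimal (fun _ hy => le_csSup hbdd hy) isClosed_Iic
    (hf.image_closure (mem_image_of_mem f hx))

namespace CmpConesAbove

variable {n : ℕ} {H : Euc n → ℝ} {U : Set (Euc n)} {u : Euc n → ℝ}

theorem sub_coneFn_le_max (hcca : CmpConesAbove H U u) (husc : UpperSemicontinuousOn u U)
    {k : ℝ} (hk : 0 ≤ k) (hC : ∀ z, 0 ≤ coneFn H k z) {c x w : Euc n} {ρ b : ℝ} (hρ : 0 < ρ)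
    (hsub : closedBall c ρ ⊆ U) (hb : ∀ z ∈ sphere c ρ, u z - coneFn H k (z - x) ≤ b)
    (hw : w ∈ closedBall c ρ) : u w - coneFn H k (w - x) ≤ max (u x) b := by
  rcases eq_or_ne w x with rfl | hwx
  · simp [coneFn_zero]
  set V := ball c ρ \ {x}
  set f := fun z => u z - coneFn H k (z - x)
  have hVopen : IsOpen V := isOpen_ball.sdiff isClosed_singleton
  have hxV : x ∉ V := fun h => h.2 rfl
  have hclV : closure V ⊆ closedBall c ρ :=
    (closure_mono sdiff_subset).trans (closure_ball_subset_closedBall (x := c))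
  have hwV : w ∈ closure V :=
    closure_sdiff ⟨by rwa [closure_ball c hρ.ne'], by rwa [closure_singleton]⟩
  have hfrV : frontier V ⊆ sphere c ρ ∪ {x} := by
    intro z hz
    rw [hVopen.frontier_eq] at hz
    by_cases hzx : z = x
    · exact Or.inr hzx
    · rw [← closedBall_sdiff_ball (x := c)]
      exact Or.inl ⟨hclV hz.1, fun hzb => hz.2 ⟨hzb, hzx⟩⟩
  have hfr_ne : (frontier V).Nonempty :=
    nonempty_frontier_iff.2 ⟨closure_nonempty_iff.1 ⟨w, hwV⟩, fun h => hxV (h ▸ mem_univ x)⟩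
  have hbdd : BddAbove (f '' closure V) := by
    obtain ⟨B, hB⟩ := (husc.mono hsub).bddAbove_of_isCompact (isCompact_closedBall c ρ)
    refine ⟨B, forall_mem_image.2 fun z hz => ?_⟩
    linarith [hB (mem_image_of_mem u (hclV hz)), hC (z - x)]
  have hcomp : IsCompact (closure V) :=
    (isCompact_closedBall c ρ).of_isClosed_subset isClosed_closure hclV
  calc f w ≤ sSup (f '' closure V) := le_csSup hbdd (mem_image_of_mem f hwV)
    _ = sSup (f '' frontier V) := hcca k hk V hVopen hcomp (hclV.trans hsub) x hxV
    _ ≤ max (u x) b := by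
      refine csSup_le (hfr_ne.image f) (forall_mem_image.2 fun z hz => ?_)
      rcases hfrV hz with hz | rfl
      · exact le_max_of_le_right (hb z hz)
      · simp [f, coneFn_zero]

/-- For the vertex `x` near `x₀`, a cone of slope `M_k` larger than `2 (sup u - u x₀ + 1) / ρ`
makes the sphere term at most `u x₀ - 1`. -/
theorem lowerSemicontinuousOn (hcca : CmpConesAbove H U u) (husc : UpperSemicontinuousOn u U)
    (hn : 1 ≤ n) (hHc : Continuous H) (hH0 : H 0 = 0) (hsub : ∀ k, IsBounded {p | H p ≤ k})
    (hU : IsOpen U) : LowerSemicontinuousOn u U := by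
  intro x₀ hx₀
  refine LowerSemicontinuousAt.lowerSemicontinuousWithinAt U ?_
  obtain ⟨ρ, hρ, hρU⟩ := nhds_basis_closedBall.mem_iff.1 (hU.mem_nhds hx₀)
  obtain ⟨S, hS⟩ := (husc.mono hρU).bddAbove_of_isCompact (isCompact_closedBall x₀ ρ)
  have hSx₀ : u x₀ ≤ S := hS (mem_image_of_mem u (mem_closedBall_self hρ.le))
  obtain ⟨k, hk, hMk⟩ := exists_le_sInf_coneFn_sphere hHc hH0 hn hsub (2 * (S - u x₀ + 1) / ρ)
  set M := sInf (coneFn H k '' sphere (0 : Euc n) 1)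
  have hρM : S - u x₀ + 1 ≤ ρ / 2 * M := by
    rw [div_le_iff₀ hρ] at hMk
    linarith
  have hC := coneFn_nonneg hHc hH0 (hsub k) hk
  have hcone : ∀ x ∈ ball x₀ (ρ / 2), u x₀ - coneFn H k (x₀ - x) ≤ max (u x) (u x₀ - 1) := by
    intro x hx
    refine hcca.sub_coneFn_le_max husc hk hC hρ hρU (fun z hz => ?_) (mem_closedBall_self hρ.le)
    have hzx : ρ / 2 ≤ ‖z - x‖ := by
      rw [← dist_eq_norm]
      linarith [mem_sphere.1 hz, mem_ball.1 hx, dist_triangle z x x₀]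
    have hM : 0 ≤ M := by nlinarith
    linarith [hS (mem_image_of_mem u (sphere_subset_closedBall hz)),
      mul_le_mul_of_nonneg_right hzx hM, norm_mul_sInf_sphere_le_coneFn hHc hH0 (hsub k) hk (z - x)]
  obtain ⟨K, hK⟩ := exists_coneFn_le_mul_norm ((hsub k).subset fun p hp => le_of_eq hp)
  have hlim : Tendsto (fun x => coneFn H k (x₀ - x)) (𝓝 x₀) (𝓝 0) := by
    refine squeeze_zero (fun x => hC _) (fun x => hK _) ?_
    simpa using (((continuous_sub_left x₀).norm.const_mul K).tendsto x₀)
  intro a ha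
  filter_upwards [ball_mem_nhds x₀ (half_pos hρ),
    hlim.eventually (gt_mem_nhds (lt_min (sub_pos.2 ha) one_pos))] with x hx hcx
  rcases le_max_iff.1 (hcone x hx) with h | h
  · linarith [min_le_left (u x₀ - a) 1]
  · linarith [min_le_right (u x₀ - a) 1]

theorem sub_le_coneFn_of_oscOn_le (hcca : CmpConesAbove H U u) (hcont : ContinuousOn u U)
    {k M R : ℝ} (hk : 0 ≤ k) (hC : ∀ z, 0 ≤ coneFn H k z)
    (hM : ∀ z, ‖z‖ * M ≤ coneFn H k z) (hR : 0 < R) {W : Set (Euc n)} {x y : Euc n}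
    (hyW : ball y R ⊆ W) (hcomp : IsCompact (closure W)) (hWU : closure W ⊆ U)
    (hxy : dist x y ≤ R) (hosc : oscOn u W ≤ R * M) :
    u x - u y ≤ coneFn H k (x - y) := by
  have hyR : closedBall y R ⊆ closure W := closure_ball y hR.ne' ▸ closure_mono hyW
  have hcontW : ContinuousOn u (closure W) := hcont.mono hWU
  have hbddA : BddAbove (u '' W) :=
    (hcomp.bddAbove_image hcontW).mono (image_mono subset_closure)
  have hbddB : BddBelow (u '' W) :=
    (hcomp.bddBelow_image hcontW).mono (image_mono subset_closure)
  have hinf : sInf (u '' W) ≤ u y := csInf_le hbddB (mem_image_of_mem u (hyW (mem_ball_self hR)))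
  have hsphere : ∀ z ∈ sphere y R, u z - coneFn H k (z - y) ≤ u y := by
    intro z hz
    have hsup := hcontW.le_csSup_image_of_mem_closure hbddA (hyR (sphere_subset_closedBall hz))
    have hcone : R * M ≤ coneFn H k (z - y) := by
      simpa [← dist_eq_norm, mem_sphere.1 hz] using hM (z - y)
    unfold oscOn at hosc
    linarith
  have h := hcca.sub_coneFn_le_max hcont.upperSemicontinuousOn hk hC hR (hyR.trans hWU) hsphere
    (mem_closedBall.2 hxy)
  rw [max_self] at h
  linarith

end CmpConesAbove

theorem cca_continuity_and_lipschitz_general {n : ℕ} (hn : 1 ≤ n) (H : Euc n → ℝ)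
    (hHconv : ConvexOn ℝ Set.univ H) (hH0 : H 0 = 0) (hHnonneg : ∀ p, 0 ≤ H p)
    (hHzb : Bornology.IsBounded {p : Euc n | H p = 0})
    (U : Set (Euc n)) (hU : IsOpen U) (u : Euc n → ℝ)
    (husc : UpperSemicontinuousOn u U) (hcca : CmpConesAbove H U u) :
    ContinuousOn u U ∧
    ∀ R : ℝ, 0 < R → ∀ x y : Euc n,
      IsCompact (closure (ball x R ∪ ball y R)) → closure (ball x R ∪ ball y R) ⊆ U →
      dist x y ≤ R → ∀ k : ℝ, 0 ≤ k →
      oscOn u (ball x R ∪ ball y R) ≤ R * sInf ((coneFn H k) '' sphere (0 : Euc n) 1) →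
      ∀ Kk : ℝ, IsLeast {K : ℝ | ∀ z, coneFn H k z ≤ K * ‖z‖} Kk →
        |u x - u y| ≤ Kk * dist x y := by
  have hsub := hHconv.isBounded_sublevel_of_isBounded_zero hH0 hHnonneg hHzb
  have hHc : Continuous H := continuousOn_univ.1 (hHconv.continuousOn isOpen_univ)
  have hcont : ContinuousOn u U := continuousOn_iff_lower_upperSemicontinuousOn.2
    ⟨hcca.lowerSemicontinuousOn husc hn hHc hH0 hsub hU, husc⟩
  refine ⟨hcont, fun R hR x y hcomp hWU hxy k hk hosc Kk hKk => ?_⟩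
  have hcone : ∀ {a b : Euc n}, ball b R ⊆ ball x R ∪ ball y R → dist a b ≤ R →
      u a - u b ≤ coneFn H k (a - b) := fun hb hab =>
    hcca.sub_le_coneFn_of_oscOn_le hcont hk (coneFn_nonneg hHc hH0 (hsub k) hk)
      (norm_mul_sInf_sphere_le_coneFn hHc hH0 (hsub k) hk) hR hb hcomp hWU hab hosc
  refine abs_sub_le_iff.2 ⟨?_, ?_⟩
  · calc u x - u y ≤ coneFn H k (x - y) := hcone subset_union_right hxy
      _ ≤ Kk * dist x y := dist_eq_norm x y ▸ hKk.1 (x - y)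
  · calc u y - u x ≤ coneFn H k (y - x) := hcone subset_union_left (dist_comm x y ▸ hxy)
      _ ≤ Kk * dist x y := dist_comm x y ▸ dist_eq_norm y x ▸ hKk.1 (y - x)

/-- Functions satisfying comparisons with cones from above are continuous and locally
Lipschitz, quantitatively. -/
theorem cca_continuity_and_lipschitz {n : ℕ} (hn : 1 ≤ n) (H : Euc n → ℝ)
    (hHconv : ConvexOn ℝ Set.univ H) (hH0 : H 0 = 0) (hHnonneg : ∀ p, 0 ≤ H p)
    (hHzb : Bornology.IsBounded {p : Euc n | H p = 0})
    (hHzi : interior {p : Euc n | H p = 0} = ∅)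
    (U : Set (Euc n)) (hU : IsOpen U) (u : Euc n → ℝ)
    (husc : UpperSemicontinuousOn u U) (hcca : CmpConesAbove H U u) :
    ContinuousOn u U ∧
    ∀ R : ℝ, 0 < R → ∀ x y : Euc n,
      IsCompact (closure (ball x R ∪ ball y R)) → closure (ball x R ∪ ball y R) ⊆ U →
      dist x y ≤ R → ∀ k : ℝ, 0 ≤ k →
      oscOn u (ball x R ∪ ball y R) ≤ R * sInf ((coneFn H k) '' sphere (0 : Euc n) 1) →
      ∀ Kk : ℝ, IsLeast {K : ℝ | ∀ z, coneFn H k z ≤ K * ‖z‖} Kk →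
        |u x - u y| ≤ Kk * dist x y :=
  cca_continuity_and_lipschitz_general hn H hHconv hH0 hHnonneg hHzb U hU u husc hcca
end

section
/- For each k > 0, the set N_k := W_k \ Γ_k is a bounded neighborhood of the origin in ℝⁿ, and the topological boundary ∂N_k is contained in Γ_k. -/
open Set Metric MeasureTheory Filter Bornology
open scoped RealInnerProductSpace

namespace NkAux

variable {n : ℕ} {H : Euc n → ℝ}

lemma subdiff_iff_forall {q p : Euc n} :
    q ∈ subdiff H p ↔ ∀ p', H p - ⟪q, p⟫ ≤ H p' - ⟪q, p'⟫ := by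
  unfold subdiff
  simp only [Set.mem_setOf_eq, inner_sub_right]
  constructor <;> intro h p' <;> have := h p' <;> linarith

lemma growth (hHconv : ConvexOn ℝ Set.univ H) (hH0 : H 0 = 0) (hHnonneg : ∀ p, 0 ≤ H p)
    (hHzb : IsBounded {p : Euc n | H p = 0}) (hn : 1 ≤ n) (hHcont : Continuous H) :
    ∃ ε > (0:ℝ), ∃ R > (0:ℝ), ∀ p : Euc n, 2 * R ≤ ‖p‖ → ε * ‖p‖ ≤ H p := by
  obtain ⟨R, hR, hRsub⟩ := hHzb.subset_closedBall_lt 0 0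
  have hsph : (Metric.sphere (0 : Euc n) (2 * R)).Nonempty := by
    refine ⟨EuclideanSpace.single (⟨0, hn⟩ : Fin n) (2 * R), ?_⟩
    rw [mem_sphere_zero_iff_norm, EuclideanSpace.norm_single]
    exact abs_of_pos (by linarith)
  obtain ⟨pε, hpε, hpεmin⟩ := (isCompact_sphere (0 : Euc n) (2 * R)).exists_isMinOn hsph
    hHcont.continuousOn
  have hpεnorm : ‖pε‖ = 2 * R := mem_sphere_zero_iff_norm.1 hpε
  have hε0 : 0 < H pε := by
    rcases (hHnonneg pε).lt_or_eq with h | h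
    · exact h
    · exfalso
      have : pε ∈ closedBall (0 : Euc n) R := hRsub h.symm
      rw [mem_closedBall_zero_iff] at this
      linarith
  refine ⟨H pε / (2 * R), by positivity, R, hR, fun p hp => ?_⟩
  have hpnorm : (0:ℝ) < ‖p‖ := by linarith
  set l : ℝ := 2 * R / ‖p‖ with hl
  have hl0 : 0 < l := by positivity
  have hl1 : l ≤ 1 := by
    rw [hl, div_le_one hpnorm]; exact hp
  have hmem : l • p ∈ Metric.sphere (0 : Euc n) (2 * R) := by
    rw [mem_sphere_zero_iff_norm, norm_smul, Real.norm_eq_abs, abs_of_pos hl0, hl,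
      div_mul_cancel₀]
    exact ne_of_gt hpnorm
  have hconv := hHconv.2 (Set.mem_univ (0 : Euc n)) (Set.mem_univ p)
    (by linarith : (0:ℝ) ≤ 1 - l) hl0.le (by ring)
  rw [smul_zero, zero_add, smul_eq_mul, smul_eq_mul, hH0, mul_zero, zero_add] at hconv
  have hlow : H pε ≤ H (l • p) := hpεmin hmem
  have : H pε ≤ l * H p := hlow.trans hconv
  rw [hl] at this
  rw [div_mul_eq_mul_div, div_le_iff₀ (by positivity : (0:ℝ) < 2 * R)]
  calc H pε * ‖p‖ ≤ (2 * R / ‖p‖ * H p) * ‖p‖ :=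
        mul_le_mul_of_nonneg_right this hpnorm.le
    _ = H p * (2 * R) := by field_simp

lemma sublevel_bounded (hHconv : ConvexOn ℝ Set.univ H) (hH0 : H 0 = 0)
    (hHnonneg : ∀ p, 0 ≤ H p) (hHzb : IsBounded {p : Euc n | H p = 0}) (hn : 1 ≤ n)
    (hHcont : Continuous H) (c : ℝ) :
    ∃ B > (0:ℝ), ∀ p : Euc n, H p ≤ c → ‖p‖ ≤ B := by
  obtain ⟨ε, hε, R, hR, hgr⟩ := growth hHconv hH0 hHnonneg hHzb hn hHcont
  refine ⟨max (2 * R) (c / ε) + 1, by positivity, fun p hp => ?_⟩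
  rcases lt_or_ge ‖p‖ (2 * R) with h | h
  · have : ‖p‖ ≤ max (2 * R) (c / ε) := h.le.trans (le_max_left _ _)
    linarith
  · have := hgr p h
    have hpc : ‖p‖ ≤ c / ε := by
      rw [le_div_iff₀ hε]
      linarith
    have : ‖p‖ ≤ max (2 * R) (c / ε) := hpc.trans (le_max_right _ _)
    linarith


lemma subdiff_lim (hHcont : Continuous H) {ps qs : ℕ → Euc n} {p q : Euc n}
    (hps : Tendsto ps atTop (nhds p)) (hqs : Tendsto qs atTop (nhds q))
    (hmem : ∀ j, qs j ∈ subdiff H (ps j)) : q ∈ subdiff H p := by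
  intro p'
  have hj : ∀ j, H (ps j) + ⟪qs j, p' - ps j⟫ ≤ H p' := fun j => hmem j p'
  have htend : Tendsto (fun j => H (ps j) + ⟪qs j, p' - ps j⟫) atTop
      (nhds (H p + ⟪q, p' - p⟫)) :=
    ((hHcont.tendsto p).comp hps).add (hqs.inner (tendsto_const_nhds.sub hps))
  exact le_of_tendsto htend (Eventually.of_forall hj)

lemma subdiff_image_closed (hHcont : Continuous H) (A : Set ℝ) (hA : IsClosed A)
    {B : ℝ} (hbd : ∀ p : Euc n, H p ∈ A → ‖p‖ ≤ B) :
    IsClosed {q : Euc n | ∃ p, H p ∈ A ∧ q ∈ subdiff H p} := by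
  rw [← isSeqClosed_iff_isClosed]
  intro qs q hqs hlim
  choose ps hpA hpm using hqs
  have hball : ∀ j, ps j ∈ Metric.closedBall (0 : Euc n) B := fun j => by
    rw [mem_closedBall_zero_iff]; exact hbd _ (hpA j)
  obtain ⟨p, _, φ, hφ, hptend⟩ :=
    (isCompact_closedBall (0 : Euc n) B).tendsto_subseq hball
  refine ⟨p, ?_, subdiff_lim hHcont hptend (hlim.comp hφ.tendsto_atTop)
    (fun j => hpm (φ j))⟩
  exact hA.mem_of_tendsto ((hHcont.tendsto p).comp hptend)
    (Eventually.of_forall fun j => hpA (φ j))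

lemma fq_convex_ineq (hHconv : ConvexOn ℝ Set.univ H) (q p p' : Euc n) {t : ℝ}
    (h0 : 0 ≤ t) (h1 : t ≤ 1) :
    H ((1 - t) • p + t • p') - ⟪q, (1 - t) • p + t • p'⟫ ≤
      (1 - t) * (H p - ⟪q, p⟫) + t * (H p' - ⟪q, p'⟫) := by
  have hc := hHconv.2 (Set.mem_univ p) (Set.mem_univ p')
    (by linarith : (0:ℝ) ≤ 1 - t) h0 (by ring)
  rw [smul_eq_mul, smul_eq_mul] at hc
  have hin : ⟪q, (1 - t) • p + t • p'⟫ = (1 - t) * ⟪q, p⟫ + t * ⟪q, p'⟫ := by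
    rw [inner_add_right, real_inner_smul_right, real_inner_smul_right]
  rw [hin]
  linarith

lemma min_on_ball_global (hHconv : ConvexOn ℝ Set.univ H) {q p : Euc n} {r : ℝ}
    (hpr : ‖p‖ < r)
    (hmin : ∀ p' ∈ Metric.closedBall (0 : Euc n) r, H p - ⟪q, p⟫ ≤ H p' - ⟪q, p'⟫) :
    ∀ p', H p - ⟪q, p⟫ ≤ H p' - ⟪q, p'⟫ := by
  intro p'
  by_contra hcon
  push_neg at hcon
  set t : ℝ := min 1 ((r - ‖p‖) / (‖p' - p‖ + 1)) with ht
  have hnn : (0:ℝ) < ‖p' - p‖ + 1 := by positivity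
  have ht0 : 0 < t := lt_min one_pos (div_pos (by linarith) hnn)
  have ht1 : t ≤ 1 := min_le_left _ _
  set x := (1 - t) • p + t • p' with hx
  have hxball : x ∈ Metric.closedBall (0 : Euc n) r := by
    rw [mem_closedBall_zero_iff]
    have hxe : x = p + t • (p' - p) := by
      rw [hx, sub_smul, one_smul, smul_sub]; abel
    rw [hxe]
    calc ‖p + t • (p' - p)‖ ≤ ‖p‖ + ‖t • (p' - p)‖ := norm_add_le _ _
      _ = ‖p‖ + t * ‖p' - p‖ := by rw [norm_smul, Real.norm_eq_abs, abs_of_pos ht0]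
      _ ≤ ‖p‖ + (r - ‖p‖) / (‖p' - p‖ + 1) * ‖p' - p‖ := by
          have := min_le_right 1 ((r - ‖p‖) / (‖p' - p‖ + 1))
          have h2 : t * ‖p' - p‖ ≤ (r - ‖p‖) / (‖p' - p‖ + 1) * ‖p' - p‖ :=
            mul_le_mul_of_nonneg_right this (norm_nonneg _)
          linarith
      _ ≤ ‖p‖ + (r - ‖p‖) := by
          have h3 : (r - ‖p‖) / (‖p' - p‖ + 1) * ‖p' - p‖ ≤ r - ‖p‖ := by
            rw [div_mul_eq_mul_div, div_le_iff₀ hnn]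
            have h4 : 0 ≤ r - ‖p‖ := by linarith
            nlinarith [norm_nonneg (p' - p)]
          linarith
      _ = r := by ring
  have hineq := fq_convex_ineq hHconv q p p' ht0.le ht1
  have hlt : H x - ⟪q, x⟫ < H p - ⟪q, p⟫ := by
    rw [hx]
    calc H ((1 - t) • p + t • p') - ⟪q, (1 - t) • p + t • p'⟫
        ≤ (1 - t) * (H p - ⟪q, p⟫) + t * (H p' - ⟪q, p'⟫) := hineq
      _ < (1 - t) * (H p - ⟪q, p⟫) + t * (H p - ⟪q, p⟫) := by nlinarith
      _ = H p - ⟪q, p⟫ := by ring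
  exact absurd (hmin x hxball) (not_le.mpr hlt)


lemma WSet_mem_nhds (hHconv : ConvexOn ℝ Set.univ H) (hH0 : H 0 = 0)
    (hHnonneg : ∀ p, 0 ≤ H p) (hHzb : IsBounded {p : Euc n | H p = 0}) (hn : 1 ≤ n)
    (hHcont : Continuous H) {k : ℝ} (hk : 0 < k) {q₀ : Euc n}
    (hq₀W : q₀ ∈ WSet H k) (hq₀Γ : q₀ ∉ GammaSet H k) : WSet H k ∈ nhds q₀ := by
  obtain ⟨B, hB0, hB⟩ := sublevel_bounded hHconv hH0 hHnonneg hHzb hn hHcont k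
  obtain ⟨p₀, hp₀0, hp₀k, hp₀sub⟩ := hq₀W
  have hmin0 : ∀ p', H p₀ - ⟪q₀, p₀⟫ ≤ H p' - ⟪q₀, p'⟫ := subdiff_iff_forall.1 hp₀sub
  have hlt : ∀ p : Euc n, (∀ p', H p - ⟪q₀, p⟫ ≤ H p' - ⟪q₀, p'⟫) → H p < k := by
    intro p hp
    by_contra hge
    push_neg at hge
    have hp₀lt : H p₀ < k := lt_of_le_of_ne hp₀k fun h => hq₀Γ ⟨p₀, h, hp₀sub⟩
    have hcont : ContinuousOn (fun t : ℝ => H (p₀ + t • (p - p₀))) (Icc 0 1) :=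
      (hHcont.comp (continuous_const.add (continuous_id.smul continuous_const))).continuousOn
    have he0 : p₀ + (0:ℝ) • (p - p₀) = p₀ := by rw [zero_smul, add_zero]
    have he1 : p₀ + (1:ℝ) • (p - p₀) = p := by rw [one_smul]; abel
    have hkmem : k ∈ Icc (H (p₀ + (0:ℝ) • (p - p₀))) (H (p₀ + (1:ℝ) • (p - p₀))) := by
      rw [he0, he1]; exact ⟨hp₀lt.le, hge⟩
    obtain ⟨t, htI, hHt⟩ := intermediate_value_Icc zero_le_one hcont hkmem
    set pt := p₀ + t • (p - p₀) with hpt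
    have hpt2 : pt = (1 - t) • p₀ + t • p := by
      rw [hpt, sub_smul, one_smul, smul_sub]; abel
    have hval : H p - ⟪q₀, p⟫ = H p₀ - ⟪q₀, p₀⟫ := le_antisymm (hp p₀) (hmin0 p)
    have hptmin : ∀ p', H pt - ⟪q₀, pt⟫ ≤ H p' - ⟪q₀, p'⟫ := by
      intro p'
      have h1 := fq_convex_ineq hHconv q₀ p₀ p htI.1 htI.2
      rw [← hpt2] at h1
      rw [hval] at h1
      have h2 := hmin0 p'
      linarith
    exact hq₀Γ ⟨pt, hHt, subdiff_iff_forall.2 hptmin⟩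
  by_contra hnb
  rw [Metric.mem_nhds_iff] at hnb
  push_neg at hnb
  have hex : ∀ j : ℕ, ∃ q, dist q q₀ < 1 / ((j : ℝ) + 1) ∧ q ∉ WSet H k := by
    intro j
    have hpos : (0:ℝ) < 1 / ((j : ℝ) + 1) := by positivity
    obtain ⟨q, hq, hqW⟩ := Set.not_subset.1 (hnb _ hpos)
    exact ⟨q, Metric.mem_ball.1 hq, hqW⟩
  choose qs hqd hqW using hex
  have hqtend : Tendsto qs atTop (nhds q₀) := by
    refine tendsto_iff_dist_tendsto_zero.2 ?_
    exact squeeze_zero (fun j => dist_nonneg) (fun j => (hqd j).le)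
      tendsto_one_div_add_atTop_nhds_zero_nat
  set r : ℝ := B + 1 with hr
  have hcpt := isCompact_closedBall (0 : Euc n) r
  have hne : (Metric.closedBall (0 : Euc n) r).Nonempty :=
    ⟨0, by rw [mem_closedBall_zero_iff, norm_zero]; linarith⟩
  have hmins : ∀ j : ℕ, ∃ p ∈ Metric.closedBall (0 : Euc n) r,
      ∀ p' ∈ Metric.closedBall (0 : Euc n) r,
        H p - ⟪qs j, p⟫ ≤ H p' - ⟪qs j, p'⟫ := by
    intro j
    obtain ⟨p, hpmem, hpmin⟩ := hcpt.exists_isMinOn hne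
      ((hHcont.sub (Continuous.inner continuous_const continuous_id)).continuousOn)
    exact ⟨p, hpmem, fun p' hp' => hpmin hp'⟩
  choose ps hpball hpmin using hmins
  obtain ⟨pb, hpbmem, φ, hφ, hptend⟩ := hcpt.tendsto_subseq hpball
  have hqφ : Tendsto (fun j => qs (φ j)) atTop (nhds q₀) := hqtend.comp hφ.tendsto_atTop
  have hpbmin : ∀ p' ∈ Metric.closedBall (0 : Euc n) r,
      H pb - ⟪q₀, pb⟫ ≤ H p' - ⟪q₀, p'⟫ := by
    intro p' hp'
    have hj : ∀ j, H (ps (φ j)) - ⟪qs (φ j), ps (φ j)⟫ ≤ H p' - ⟪qs (φ j), p'⟫ :=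
      fun j => hpmin (φ j) p' hp'
    have h1 : Tendsto (fun j => H (ps (φ j)) - ⟪qs (φ j), ps (φ j)⟫) atTop
        (nhds (H pb - ⟪q₀, pb⟫)) :=
      ((hHcont.tendsto pb).comp hptend).sub (hqφ.inner hptend)
    have h2 : Tendsto (fun j => H p' - ⟪qs (φ j), p'⟫) atTop
        (nhds (H p' - ⟪q₀, p'⟫)) :=
      tendsto_const_nhds.sub (hqφ.inner tendsto_const_nhds)
    exact le_of_tendsto_of_tendsto' h1 h2 hj
  have hp₀ball : p₀ ∈ Metric.closedBall (0 : Euc n) r := by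
    rw [mem_closedBall_zero_iff]
    have := hB p₀ hp₀k
    linarith
  have hpbglob : ∀ p', H pb - ⟪q₀, pb⟫ ≤ H p' - ⟪q₀, p'⟫ := fun p' =>
    (hpbmin p₀ hp₀ball).trans (hmin0 p')
  have hpblt : H pb < k := hlt pb hpbglob
  have hev : ∀ᶠ j in atTop, H (ps (φ j)) < k :=
    ((hHcont.tendsto pb).comp hptend).eventually_lt_const hpblt
  obtain ⟨j, hj⟩ := hev.exists
  have hpnorm : ‖ps (φ j)‖ < r := lt_of_le_of_lt (hB _ hj.le) (by linarith)
  have hglob := min_on_ball_global hHconv hpnorm (hpmin (φ j))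
  exact hqW (φ j) ⟨ps (φ j), hHnonneg _, hj.le, subdiff_iff_forall.2 hglob⟩


lemma WSet_bounded (hHnonneg : ∀ p, 0 ≤ H p) (hHcont : Continuous H) {k B : ℝ}
    (hB0 : 0 < B) (hB : ∀ p : Euc n, H p ≤ k → ‖p‖ ≤ B) :
    IsBounded (WSet H k) := by
  obtain ⟨pM, hpMmem, hpMmax⟩ := (isCompact_closedBall (0 : Euc n) (B + 1)).exists_isMaxOn
    ⟨0, by rw [mem_closedBall_zero_iff, norm_zero]; linarith⟩ hHcont.continuousOn
  have key : ∀ q ∈ WSet H k, ‖q‖ ≤ H pM := by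
    rintro q ⟨p, hp0, hpk, hsub⟩
    rcases eq_or_ne q 0 with rfl | hq
    · simpa using hHnonneg pM
    · have hqpos : (0:ℝ) < ‖q‖ := norm_pos_iff.2 hq
      have hball : p + ‖q‖⁻¹ • q ∈ Metric.closedBall (0 : Euc n) (B + 1) := by
        rw [mem_closedBall_zero_iff]
        have h1 : ‖(‖q‖⁻¹ : ℝ) • q‖ = 1 := by
          rw [norm_smul, Real.norm_eq_abs, abs_of_pos (by positivity),
            inv_mul_cancel₀ (ne_of_gt hqpos)]
        calc ‖p + ‖q‖⁻¹ • q‖ ≤ ‖p‖ + ‖(‖q‖⁻¹ : ℝ) • q‖ := norm_add_le _ _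
          _ ≤ B + 1 := by rw [h1]; have := hB p hpk; linarith
      have hineq := hsub (p + ‖q‖⁻¹ • q)
      have hin : ⟪q, (p + ‖q‖⁻¹ • q) - p⟫ = ‖q‖ := by
        rw [add_sub_cancel_left, real_inner_smul_right, real_inner_self_eq_norm_sq]
        field_simp
      rw [hin] at hineq
      have hmax : H (p + ‖q‖⁻¹ • q) ≤ H pM := hpMmax hball
      linarith
  exact Metric.isBounded_closedBall.subset
    (fun q hq => mem_closedBall_zero_iff.2 (key q hq))

end NkAux

/-- `N_k = W_k \ Γ_k` is a bounded neighborhood of the origin whose boundary lies in `Γ_k`. -/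
theorem Nk_bounded_neighborhood {n : ℕ} (hn : 1 ≤ n) (H : Euc n → ℝ)
    (hHconv : ConvexOn ℝ Set.univ H) (hH0 : H 0 = 0) (hHnonneg : ∀ p, 0 ≤ H p)
    (hHzb : Bornology.IsBounded {p : Euc n | H p = 0})
    (hHzi : interior {p : Euc n | H p = 0} = ∅)
    (k : ℝ) (hk : 0 < k) :
    Bornology.IsBounded (WSet H k \ GammaSet H k) ∧
    (WSet H k \ GammaSet H k) ∈ nhds (0 : Euc n) ∧
    frontier (WSet H k \ GammaSet H k) ⊆ GammaSet H k := by
  have hHcont : Continuous H := hHconv.locallyLipschitz.continuous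
  obtain ⟨B, hB0, hB⟩ := NkAux.sublevel_bounded hHconv hH0 hHnonneg hHzb hn hHcont k
  have hWeq : WSet H k = {q : Euc n | ∃ p, H p ∈ Icc 0 k ∧ q ∈ subdiff H p} := by
    ext q
    simp only [WSet, Set.mem_setOf_eq, Set.mem_Icc, and_assoc]
  have hWclosed : IsClosed (WSet H k) := by
    rw [hWeq]
    exact NkAux.subdiff_image_closed hHcont (Icc 0 k) isClosed_Icc (fun p hp => hB p hp.2)
  have hΓeq : GammaSet H k = {q : Euc n | ∃ p, H p ∈ ({k} : Set ℝ) ∧ q ∈ subdiff H p} := by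
    ext q
    simp only [GammaSet, Set.mem_setOf_eq, Set.mem_singleton_iff]
  have hΓclosed : IsClosed (GammaSet H k) := by
    rw [hΓeq]
    exact NkAux.subdiff_image_closed hHcont {k} isClosed_singleton
      (fun p hp => hB p (le_of_eq hp))
  have hWbd : IsBounded (WSet H k) := NkAux.WSet_bounded hHnonneg hHcont hB0 hB
  have hNopen : IsOpen (WSet H k \ GammaSet H k) := by
    rw [isOpen_iff_mem_nhds]
    rintro q ⟨hqW, hqΓ⟩
    rw [diff_eq]
    exact Filter.inter_mem
      (NkAux.WSet_mem_nhds hHconv hH0 hHnonneg hHzb hn hHcont hk hqW hqΓ)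
      (hΓclosed.isOpen_compl.mem_nhds hqΓ)
  have h0W : (0 : Euc n) ∈ WSet H k := by
    refine ⟨0, le_of_eq hH0.symm, by rw [hH0]; exact hk.le, ?_⟩
    intro p'
    simpa [hH0] using hHnonneg p'
  have h0Γ : (0 : Euc n) ∉ GammaSet H k := by
    rintro ⟨p, hpk, hsub⟩
    have h := hsub 0
    rw [inner_zero_left, add_zero, hH0, hpk] at h
    linarith
  refine ⟨hWbd.subset diff_subset, hNopen.mem_nhds ⟨h0W, h0Γ⟩, ?_⟩
  intro q hq
  rw [hNopen.frontier_eq] at hq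
  obtain ⟨hqc, hqn⟩ := hq
  have hqW : q ∈ WSet H k := by
    have h := closure_mono (diff_subset (s := WSet H k) (t := GammaSet H k)) hqc
    rwa [hWclosed.closure_eq] at h
  by_contra hqΓ
  exact hqn ⟨hqW, hqΓ⟩
end
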